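/- Let A > 0 and ŝ(z) = ½(1 + tanh(z/√2)). Suppose û₁ is a nonzero solution of (1+A)û₁'' - (1-ŝ)(1-2ŝ)û₁ = 0 on ℝ with û₁(z) ~ e^{z/√(1+A)} as z → -∞, and û₃ is a solution of the same equation with û₃(z) → 1 as z → +∞. Then the Wronskian W(û₁, û₃) = û₁'û₃ - û₃'û₁ is nonzero. (Equivalently, if û₁ = C·û₃ for some constant C, then û₁ ≡ 0, a contradiction, by the energy identity 0 = ∫_ℝ A(û₁')² + ŝ²((û₁/ŝ)')² dz.) -/

import Mathlib

open Filter

/-- The profile `ŝ(z) = (1 + tanh(z/√2))/2`. -/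
noncomputable def shat (z : ℝ) : ℝ := (1 + Real.tanh (z / Real.sqrt 2)) / 2

lemma shat_eq (z : ℝ) : shat z = (1 + Real.exp (-(Real.sqrt 2 * z)))⁻¹ := by
  have h2 : (0:ℝ) < Real.sqrt 2 := Real.sqrt_pos.2 (by norm_num)
  have hx : Real.sqrt 2 * z = z / Real.sqrt 2 + z / Real.sqrt 2 := by
    rw [← add_div, eq_div_iff h2.ne']
    linear_combination z * Real.mul_self_sqrt (by norm_num : (0:ℝ) ≤ 2)
  unfold shat
  rw [Real.tanh_eq_sinh_div_cosh, Real.sinh_eq, Real.cosh_eq, hx]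
  set x := z / Real.sqrt 2 with hxdef
  rw [neg_add, Real.exp_add, Real.exp_neg]
  have hE := Real.exp_pos x
  have hd : Real.exp x + (Real.exp x)⁻¹ ≠ 0 := by positivity
  have hd2 : (1 : ℝ) + (Real.exp x)⁻¹ * (Real.exp x)⁻¹ ≠ 0 := by positivity
  field_simp
  ring

lemma shat_pos (z : ℝ) : 0 < shat z := by
  rw [shat_eq]; positivity

lemma shat_lt_one (z : ℝ) : shat z < 1 := by
  rw [shat_eq]
  have h := Real.exp_pos (-(Real.sqrt 2 * z))
  rw [inv_lt_one_iff₀]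
  right; linarith

lemma hasDerivAt_shat (z : ℝ) :
    HasDerivAt shat (Real.sqrt 2 * (shat z * (1 - shat z))) z := by
  have hfun : shat = fun z => (1 + Real.exp (-(Real.sqrt 2 * z)))⁻¹ := funext shat_eq
  rw [hfun]
  have h1 : HasDerivAt (fun z : ℝ => 1 + Real.exp (-(Real.sqrt 2 * z)))
      (Real.exp (-(Real.sqrt 2 * z)) * -(Real.sqrt 2)) z := by
    have hin : HasDerivAt (fun z : ℝ => -(Real.sqrt 2 * z)) (-(Real.sqrt 2)) z := by
      simpa using ((hasDerivAt_id z).const_mul (Real.sqrt 2)).fun_neg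
    exact ((Real.hasDerivAt_exp _).comp z hin).const_add 1
  have hne : (1 + Real.exp (-(Real.sqrt 2 * z))) ≠ 0 := by positivity
  have h2 := h1.fun_inv hne
  refine h2.congr_deriv ?_
  have hE := Real.exp_pos (-(Real.sqrt 2 * z))
  field_simp
  ring

set_option maxHeartbeats 1000000 in
theorem stmt17 (A : ℝ) (hA : 0 < A) (u1 u3 : ℝ → ℝ)
    (hu1 : ContDiff ℝ (⊤ : ℕ∞) u1) (hu3 : ContDiff ℝ (⊤ : ℕ∞) u3)
    (hu1ne : u1 ≠ 0)
    (heq1 : ∀ z : ℝ,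
      (1 + A) * deriv (deriv u1) z - (1 - shat z) * (1 - 2 * shat z) * u1 z = 0)
    (heq3 : ∀ z : ℝ,
      (1 + A) * deriv (deriv u3) z - (1 - shat z) * (1 - 2 * shat z) * u3 z = 0)
    (hasym1 : Tendsto (fun z => u1 z / Real.exp (z / Real.sqrt (1 + A))) atBot (nhds 1))
    (hasym1' : Tendsto (fun z =>
        deriv u1 z / deriv (fun w => Real.exp (w / Real.sqrt (1 + A))) z) atBot (nhds 1))
    (hasym3 : Tendsto u3 atTop (nhds 1)) :
    ∀ z : ℝ, deriv u1 z * u3 z - deriv u3 z * u1 z ≠ 0 := by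
  intro z0 h0
  have hB : (0:ℝ) < 1 + A := by linarith
  have hcd1 := contDiff_infty_iff_deriv.mp (hu1.of_le (by simp) : ContDiff ℝ ((⊤:ℕ∞):WithTop ℕ∞) u1)
  have hcd3 := contDiff_infty_iff_deriv.mp (hu3.of_le (by simp) : ContDiff ℝ ((⊤:ℕ∞):WithTop ℕ∞) u3)
  have hd1 : ∀ x, HasDerivAt u1 (deriv u1 x) x := fun x => (hcd1.1 x).hasDerivAt
  have hd3 : ∀ x, HasDerivAt u3 (deriv u3 x) x := fun x => (hcd3.1 x).hasDerivAt
  have hd1' : ∀ x, HasDerivAt (deriv u1) (deriv (deriv u1) x) x :=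
    fun x => ((hcd1.2.differentiable (by simp)) x).hasDerivAt
  have hd3' : ∀ x, HasDerivAt (deriv u3) (deriv (deriv u3) x) x :=
    fun x => ((hcd3.2.differentiable (by simp)) x).hasDerivAt
  have hdd1 : ∀ x, deriv (deriv u1) x = (1 - shat x) * (1 - 2 * shat x) * u1 x / (1 + A) := by
    intro x; rw [eq_div_iff hB.ne']; linarith [heq1 x]
  have hdd3 : ∀ x, deriv (deriv u3) x = (1 - shat x) * (1 - 2 * shat x) * u3 x / (1 + A) := by
    intro x; rw [eq_div_iff hB.ne']; linarith [heq3 x]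
  -- Wronskian is constant, hence identically zero
  have hWd : ∀ x, HasDerivAt (fun z => deriv u1 z * u3 z - deriv u3 z * u1 z) 0 x := by
    intro x
    have h := ((hd1' x).fun_mul (hd3 x)).fun_sub ((hd3' x).fun_mul (hd1 x))
    refine h.congr_deriv ?_
    rw [hdd1 x, hdd3 x]
    field_simp
    ring
  have hWdiff : Differentiable ℝ (fun z => deriv u1 z * u3 z - deriv u3 z * u1 z) :=
    fun x => (hWd x).differentiableAt
  have hWc : ∀ x, deriv u1 x * u3 x - deriv u3 x * u1 x = 0 := by
    intro x
    have hmono := monotone_of_deriv_nonneg hWdiff (fun y => (hWd y).deriv.ge)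
    have hanti := antitone_of_deriv_nonpos hWdiff (fun y => (hWd y).deriv.le)
    rcases le_total x z0 with h | h
    · have a := hmono h; have b := hanti h; simp only at a b; linarith
    · have a := hmono h; have b := hanti h; simp only at a b; linarith
  -- u3 is close to 1 on a ray at +∞
  have hev : ∀ᶠ z in atTop, 1/2 < u3 z ∧ u3 z < 2 := by
    have h1 := hasym3.eventually (eventually_gt_nhds (by norm_num : (1:ℝ)/2 < 1))
    have h2 := hasym3.eventually (eventually_lt_nhds (by norm_num : (1:ℝ) < 2))
    filter_upwards [h1, h2] with z a b; exact ⟨a, b⟩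
  obtain ⟨M, hM⟩ := eventually_atTop.mp hev
  have hu3ne : ∀ z, M ≤ z → u3 z ≠ 0 := fun z hz => by have := (hM z hz).1; linarith
  -- u1 is proportional to u3 on [M, ∞)
  have hgd : ∀ x, M ≤ x → deriv (fun z => u1 z / u3 z) x = 0 := by
    intro x hx
    rw [((hd1 x).fun_div (hd3 x) (hu3ne x hx)).deriv]
    rw [div_eq_zero_iff]; left; linarith [hWc x]
  have hgc : ContinuousOn (fun z => u1 z / u3 z) (Set.Ici M) :=
    hcd1.1.continuous.continuousOn.div hcd3.1.continuous.continuousOn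
      (fun z hz => hu3ne z hz)
  have hgdiff : DifferentiableOn ℝ (fun z => u1 z / u3 z) (interior (Set.Ici M)) := by
    rw [interior_Ici]
    exact fun x hx =>
      ((hd1 x).div (hd3 x) (hu3ne x (le_of_lt hx))).differentiableAt.differentiableWithinAt
  have hgmono := monotoneOn_of_deriv_nonneg (convex_Ici M) hgc hgdiff
      (fun x hx => by rw [interior_Ici] at hx; exact (hgd x (le_of_lt hx)).ge)
  have hganti := antitoneOn_of_deriv_nonpos (convex_Ici M) hgc hgdiff
      (fun x hx => by rw [interior_Ici] at hx; exact (hgd x (le_of_lt hx)).le)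
  have hrat : ∀ z, M ≤ z → u1 z = u1 M / u3 M * u3 z := by
    intro z hz
    have hzm : z ∈ Set.Ici M := hz
    have e1 := hgmono Set.self_mem_Ici hzm hz
    have e2 := hganti Set.self_mem_Ici hzm hz
    simp only at e1 e2
    have heq : u1 z / u3 z = u1 M / u3 M := le_antisymm e2 e1
    field_simp [hu3ne z hz, hu3ne M le_rfl] at heq ⊢
    linarith [heq]
  have hbound : ∀ z, M ≤ z → (u1 z)^2 ≤ 4 * (u1 M / u3 M)^2 := by
    intro z hz
    rw [hrat z hz]
    have h3 := hM z hz
    nlinarith [mul_nonneg (sq_nonneg (u1 M / u3 M))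
      (mul_pos (by linarith [h3.2] : (0:ℝ) < 2 - u3 z)
        (by linarith [h3.1] : (0:ℝ) < 2 + u3 z)).le]
  -- energy functional
  obtain ⟨c, hcdef⟩ : ∃ c : ℝ, c = 3 / (2 * (A + 2)) := ⟨_, rfl⟩
  have hA2 : (0:ℝ) < A + 2 := by linarith
  have hcpos : 0 < c := by rw [hcdef]; positivity
  have hs2 : Real.sqrt 2 ^ 2 = 2 := Real.sq_sqrt (by norm_num)
  have hs2pos : 0 < Real.sqrt 2 := Real.sqrt_pos.2 (by norm_num)
  have hs2lb : (1.4:ℝ) ≤ Real.sqrt 2 := by nlinarith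
  obtain ⟨F, hFdef⟩ : ∃ F : ℝ → ℝ, F = fun z =>
    (1 + A) * (u1 z * deriv u1 z - c * ((1 - shat z) * (u1 z)^2)) := ⟨_, rfl⟩
  obtain ⟨D, hDdef⟩ : ∃ D : ℝ → ℝ, D = fun z =>
    (1 + A) * (deriv u1 z - c * (1 - shat z) * u1 z)^2
      + (u1 z)^2 * ((1 - shat z) * ((1 - 2*shat z) + Real.sqrt 2 * c * (1 + A) * shat z
        - (1 + A) * c^2 * (1 - shat z))) := ⟨_, rfl⟩
  have hsqder : ∀ z, HasDerivAt (fun z => (u1 z)^2) (2 * u1 z * deriv u1 z) z := by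
    intro z
    have h := (hd1 z).fun_pow 2
    refine h.congr_deriv ?_ <;> norm_num <;> ring
  have hF : ∀ z, HasDerivAt F (D z) z := by
    intro z
    have h1 : HasDerivAt (fun z => u1 z * deriv u1 z)
        (deriv u1 z * deriv u1 z + u1 z * deriv (deriv u1) z) z := (hd1 z).mul (hd1' z)
    have h2 : HasDerivAt (fun z => (1 - shat z) * (u1 z)^2)
        (-(Real.sqrt 2 * (shat z * (1 - shat z))) * (u1 z)^2
          + (1 - shat z) * (2 * u1 z * deriv u1 z)) z :=
      ((hasDerivAt_shat z).const_sub 1).mul (hsqder z)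
    have h3 := (h1.fun_sub (h2.const_mul c)).const_mul (1 + A)
    rw [hFdef]
    refine h3.congr_deriv ?_
    rw [hDdef, hdd1 z]
    field_simp
    ring
  have hDterm : ∀ z, 0 < (1 - 2*shat z) + Real.sqrt 2 * c * (1 + A) * shat z
      - (1 + A) * c^2 * (1 - shat z) := by
    intro z
    have h01 := shat_pos z; have h02 := shat_lt_one z
    have hQ : 0 < (1 - shat z) * (4*A^2 + 7*A + 7)
        + shat z * (2*(A+2) * (3*Real.sqrt 2*(A+1) - 2*(A+2))) := by
      have q1 : (0:ℝ) < 4*A^2 + 7*A + 7 := by nlinarith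
      have q2 : (0:ℝ) < 3*Real.sqrt 2*(A+1) - 2*(A+2) := by nlinarith [hs2lb, hA]
      have t1 := mul_pos (by linarith : (0:ℝ) < 1 - shat z) q1
      have t2 := mul_pos h01 (mul_pos (by linarith : (0:ℝ) < 2*(A+2)) q2)
      linarith
    have hkey : ((1 - 2*shat z) + Real.sqrt 2 * c * (1 + A) * shat z
          - (1 + A) * c^2 * (1 - shat z)) * (4*(A+2)^2)
        = (1 - shat z) * (4*A^2 + 7*A + 7)
          + shat z * (2*(A+2) * (3*Real.sqrt 2*(A+1) - 2*(A+2))) := by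
      rw [hcdef]; field_simp; ring
    nlinarith [hQ, hkey, (by positivity : (0:ℝ) < 4*(A+2)^2)]
  have hD0 : ∀ z, 0 ≤ D z := by
    intro z
    have h01 := shat_pos z; have h02 := shat_lt_one z
    have hP := hDterm z
    rw [hDdef]
    have t1 : 0 ≤ (1 + A) * (deriv u1 z - c * (1 - shat z) * u1 z)^2 :=
      mul_nonneg hB.le (sq_nonneg _)
    have t2 : 0 ≤ (u1 z)^2 * ((1 - shat z) * ((1 - 2*shat z)
        + Real.sqrt 2 * c * (1 + A) * shat z - (1 + A) * c^2 * (1 - shat z))) :=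
      mul_nonneg (sq_nonneg _) (mul_nonneg (by linarith) hP.le)
    simp only
    linarith
  have hDpos : ∀ z, u1 z ≠ 0 → 0 < D z := by
    intro z hz
    have h01 := shat_pos z; have h02 := shat_lt_one z
    have hP := hDterm z
    have hu2 : 0 < (u1 z)^2 := by
      have h := abs_pos.2 hz
      calc (0:ℝ) < |u1 z|^2 := by positivity
      _ = (u1 z)^2 := sq_abs _
    rw [hDdef]
    have t1 : 0 ≤ (1 + A) * (deriv u1 z - c * (1 - shat z) * u1 z)^2 :=
      mul_nonneg hB.le (sq_nonneg _)
    have t2 : 0 < (u1 z)^2 * ((1 - shat z) * ((1 - 2*shat z)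
        + Real.sqrt 2 * c * (1 + A) * shat z - (1 + A) * c^2 * (1 - shat z))) :=
      mul_pos hu2 (mul_pos (by linarith) hP)
    simp only
    linarith
  have hFdiff : Differentiable ℝ F := fun z => (hF z).differentiableAt
  have hFmono : Monotone F :=
    monotone_of_deriv_nonneg hFdiff (fun z => by rw [(hF z).deriv]; exact hD0 z)
  -- F tends to 0 at -∞
  have hsB : 0 < Real.sqrt (1 + A) := Real.sqrt_pos.2 hB
  have he0 : Tendsto (fun z : ℝ => Real.exp (z / Real.sqrt (1 + A))) atBot (nhds 0) :=
    Real.tendsto_exp_atBot.comp (tendsto_id.atBot_div_const hsB)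
  have hederiv : ∀ z : ℝ, HasDerivAt (fun w => Real.exp (w / Real.sqrt (1 + A)))
      (Real.exp (z / Real.sqrt (1 + A)) * (Real.sqrt (1 + A))⁻¹) z := by
    intro z
    have hin : HasDerivAt (fun w : ℝ => w / Real.sqrt (1 + A)) ((Real.sqrt (1+A))⁻¹) z := by
      simpa [one_div] using (hasDerivAt_id z).div_const (Real.sqrt (1+A))
    exact (Real.hasDerivAt_exp _).comp z hin
  have hu1_0 : Tendsto u1 atBot (nhds 0) := by
    have h := hasym1.mul he0
    have heq : ∀ z, u1 z / Real.exp (z / Real.sqrt (1 + A))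
        * Real.exp (z / Real.sqrt (1 + A)) = u1 z :=
      fun z => div_mul_cancel₀ _ (Real.exp_ne_zero _)
    simpa [heq] using h
  have hu1'_0 : Tendsto (deriv u1) atBot (nhds 0) := by
    have hrw : (fun z => deriv u1 z / deriv (fun w => Real.exp (w / Real.sqrt (1 + A))) z)
        = fun z => deriv u1 z / (Real.exp (z / Real.sqrt (1 + A)) * (Real.sqrt (1 + A))⁻¹) := by
      funext z; rw [(hederiv z).deriv]
    rw [hrw] at hasym1'
    have hd0 : Tendsto (fun z : ℝ => Real.exp (z / Real.sqrt (1 + A)) * (Real.sqrt (1+A))⁻¹)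
        atBot (nhds 0) := by
      simpa using he0.mul_const (Real.sqrt (1+A))⁻¹
    have h := hasym1'.mul hd0
    have heq : ∀ z, deriv u1 z / (Real.exp (z / Real.sqrt (1 + A)) * (Real.sqrt (1+A))⁻¹)
        * (Real.exp (z / Real.sqrt (1 + A)) * (Real.sqrt (1+A))⁻¹) = deriv u1 z := by
      intro z
      have hne : Real.exp (z / Real.sqrt (1 + A)) * (Real.sqrt (1+A))⁻¹ ≠ 0 := by positivity
      exact div_mul_cancel₀ _ hne
    simpa [heq] using h
  have hF0 : Tendsto F atBot (nhds 0) := by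
    have hprod : Tendsto (fun z => u1 z * deriv u1 z) atBot (nhds 0) := by
      simpa using hu1_0.mul hu1'_0
    have hsq0 : Tendsto (fun z => u1 z * u1 z) atBot (nhds 0) := by
      simpa using hu1_0.mul hu1_0
    have hsq : Tendsto (fun z => (1 - shat z) * (u1 z)^2) atBot (nhds 0) := by
      apply squeeze_zero_norm _ hsq0
      intro z
      have h01 := shat_pos z; have h02 := shat_lt_one z
      rw [Real.norm_eq_abs, abs_of_nonneg (mul_nonneg (by linarith) (sq_nonneg _))]
      nlinarith [sq_nonneg (u1 z), mul_nonneg h01.le (sq_nonneg (u1 z))]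
    have h := (hprod.sub (hsq.const_mul c)).const_mul (1 + A)
    rw [hFdef]
    simpa using h
  have hFnonneg : ∀ z, 0 ≤ F z := fun z =>
    le_of_tendsto hF0 ((eventually_le_atBot z).mono fun y hy => hFmono hy)
  -- a point where F is positive
  obtain ⟨N, hN⟩ := eventually_atBot.mp
    (hasym1.eventually (eventually_gt_nhds (by norm_num : (1:ℝ)/2 < 1)))
  have hu1pos : ∀ z, z ≤ N → 0 < u1 z := by
    intro z hz
    have h := hN z hz
    have he := Real.exp_pos (z / Real.sqrt (1 + A))
    rw [lt_div_iff₀ he] at h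
    linarith
  have hFN : 0 < F N := by
    have hsm : StrictMonoOn F (Set.Icc (N - 1) N) := by
      apply strictMonoOn_of_deriv_pos (convex_Icc _ _) hFdiff.continuous.continuousOn
      intro x hx
      rw [interior_Icc] at hx
      rw [(hF x).deriv]
      exact hDpos x (hu1pos x hx.2.le).ne'
    have h := hsm (Set.left_mem_Icc.2 (by linarith)) (Set.right_mem_Icc.2 (by linarith))
      (by linarith)
    linarith [hFnonneg (N - 1)]
  -- linear growth of u1^2 on the ray, contradiction with boundedness
  obtain ⟨T, hTdef⟩ : ∃ T : ℝ, T = max M N := ⟨_, rfl⟩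
  have hNT : N ≤ T := hTdef ▸ le_max_right M N
  have hMT : M ≤ T := hTdef ▸ le_max_left M N
  have hrayF : ∀ z, T ≤ z → F N ≤ F z := fun z hz =>
    hFmono (le_trans hNT hz)
  obtain ⟨κ, hκdef⟩ : ∃ κ : ℝ, κ = F N / (1 + A) := ⟨_, rfl⟩
  have hκpos : 0 < κ := hκdef ▸ div_pos hFN hB
  have huu' : ∀ z, T ≤ z → κ ≤ u1 z * deriv u1 z := by
    intro z hz
    have h := hrayF z hz
    have h01 := shat_pos z; have h02 := shat_lt_one z
    have hterm : 0 ≤ c * ((1 - shat z) * (u1 z)^2) :=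
      mul_nonneg hcpos.le (mul_nonneg (by linarith) (sq_nonneg _))
    have hFz : F z = (1 + A) * (u1 z * deriv u1 z - c * ((1 - shat z) * (u1 z)^2)) := by
      rw [hFdef]
    rw [hFz] at h
    rw [hκdef, div_le_iff₀ hB]
    nlinarith [mul_nonneg hB.le hterm]
  have hG : ∀ z, HasDerivAt (fun z => (u1 z)^2 - 2 * κ * z)
      (2 * u1 z * deriv u1 z - 2 * κ) z := by
    intro z
    have h2 : HasDerivAt (fun z : ℝ => 2 * κ * z) (2 * κ) z := by
      simpa using (hasDerivAt_id z).const_mul (2 * κ)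
    exact (hsqder z).sub h2
  have hGmono : MonotoneOn (fun z => (u1 z)^2 - 2 * κ * z) (Set.Ici T) := by
    apply monotoneOn_of_deriv_nonneg (convex_Ici T)
      (fun z _ => (hG z).differentiableAt.continuousAt.continuousWithinAt)
      (fun z hz => (hG z).differentiableAt.differentiableWithinAt)
    intro x hx
    rw [interior_Ici] at hx
    rw [(hG x).deriv]
    linarith [huu' x hx.le]
  obtain ⟨Z, hZdef⟩ : ∃ Z : ℝ, Z = T + (4 * (u1 M / u3 M)^2 + 1) / (2 * κ) := ⟨_, rfl⟩
  have hZT : T ≤ Z := by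
    rw [hZdef]
    have hq : 0 ≤ (4 * (u1 M / u3 M)^2 + 1) / (2 * κ) := by positivity
    linarith
  have hgr := hGmono (Set.self_mem_Ici) (Set.mem_Ici.2 hZT) hZT
  have hZM : M ≤ Z := le_trans hMT hZT
  have hub := hbound Z hZM
  have h2κ : 2 * κ * (Z - T) = 4 * (u1 M / u3 M)^2 + 1 := by
    rw [hZdef]
    have hne : (2:ℝ) * κ ≠ 0 := by positivity
    field_simp
    ring
  simp only at hgr
  nlinarith [hgr, hub, h2κ, sq_nonneg (u1 T)]
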